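/- Fix 0 < λ < 1/3 and let A be the attractor of f_j(z) = 1 + λ e^{(−1)^j iπ/3} z (j = 1,2). Let Y''_j be the line parallel to Y_j := f_j({x = 0}) passing through P := (1 + λ/2, 0). Then dist(f_j(A), Y''_j) ≥ (3/4)λ > (2/√3)λ². -/

import Mathlib

/-!
Write θ_j = λ e^{∓iπ/3}, so |θ_j| = λ and Re θ_j = λ/2. The attractor A satisfies
‖a‖ ≤ 1 + λ‖b‖ for some b ∈ A, hence ‖a‖ ≤ 1/(1-λ) on A. Unfolding the self-similarity twice,
a = 1 + θ_k + θ_kθ_m d with d ∈ A, so Re a ≥ 1 + λ/2 - λ²/(1-λ) ≥ 1 when λ ≤ 1/3.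
Finally, for a point w of the line through P parallel to θ_j·iℝ,
λ·dist(f_j(b), w) ≥ Re(θ̄_j (f_j(b) - P)) = λ²(Re b - 1/4) ≥ (3/4)λ².
-/

open Complex

/-- θ_j = λ e^{(−1)^j iπ/3}. -/
noncomputable def theta (lam : ℝ) (j : ℕ) : ℂ :=
  (lam : ℂ) * Complex.exp ((-1 : ℂ) ^ j * Complex.I * (Real.pi / 3))

/-- The contracting similarity f_j(z) = 1 + θ_j z of ℂ. -/
noncomputable def fmap (lam : ℝ) (j : ℕ) (z : ℂ) : ℂ := 1 + theta lam j * z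

/-- The line through the point w₀ parallel to f_j(Y), Y = {x = 0}: its direction is
i·θ_j, so it is {w₀ + θ_j z : Re z = 0}. -/
def lineThrough (lam : ℝ) (j : ℕ) (w₀ : ℂ) : Set ℂ :=
  {w : ℂ | ∃ z : ℂ, z.re = 0 ∧ w = w₀ + theta lam j * z}

open ComplexConjugate

theorem IsCompact.norm_le_div_one_sub {E : Type*} [SeminormedAddCommGroup E] {K : Set E}
    (hK : IsCompact K) {c r : ℝ} (hr0 : 0 ≤ r) (hr1 : r < 1)
    (h : ∀ a ∈ K, ∃ b ∈ K, ‖a‖ ≤ c + r * ‖b‖) : ∀ a ∈ K, ‖a‖ ≤ c / (1 - r) := by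
  rcases K.eq_empty_or_nonempty with rfl | hne
  · simp
  obtain ⟨a₀, ha₀, hmax⟩ := hK.exists_isMaxOn hne continuous_norm.continuousOn
  obtain ⟨b, hb, hab⟩ := h a₀ ha₀
  have hb_le : ‖b‖ ≤ ‖a₀‖ := hmax hb
  have ha₀_le : ‖a₀‖ ≤ c / (1 - r) := by
    rw [le_div_iff₀ (by linarith)]
    nlinarith
  exact fun a ha => (hmax ha).trans ha₀_le

theorem theta_eq (lam : ℝ) (j : ℕ) :
    theta lam j = lam * exp (((-1) ^ j * (Real.pi / 3) : ℝ) * I) := by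
  rw [theta]
  push_cast
  ring_nf

theorem norm_theta {lam : ℝ} (hlam : 0 ≤ lam) (j : ℕ) : ‖theta lam j‖ = lam := by
  rw [theta_eq, norm_mul, norm_exp_ofReal_mul_I, norm_real, Real.norm_of_nonneg hlam, mul_one]

theorem re_theta (lam : ℝ) {j : ℕ} (hj : j = 1 ∨ j = 2) : (theta lam j).re = lam / 2 := by
  rw [theta_eq, re_ofReal_mul, exp_ofReal_mul_I_re]
  rcases hj with rfl | rfl <;> simp [Real.cos_pi_div_three] <;> ring

theorem re_conj_theta_mul_sub_le_mul_dist {lam : ℝ} (hlam : 0 ≤ lam) {j : ℕ} (q : ℂ)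
    {w₀ w : ℂ} (hw : w ∈ lineThrough lam j w₀) :
    (conj (theta lam j) * (q - w₀)).re ≤ lam * dist q w := by
  obtain ⟨z, hz, rfl⟩ := hw
  -- the component along the line is `‖θ_j‖² z`, which is purely imaginary
  have hsplit : conj (theta lam j) * (q - w₀)
      = conj (theta lam j) * (q - (w₀ + theta lam j * z)) + ((‖theta lam j‖ ^ 2 : ℝ) : ℂ) * z := by
    push_cast
    rw [← conj_mul']
    ring
  rw [hsplit, add_re, re_ofReal_mul, hz, mul_zero, add_zero, dist_eq]
  calc (conj (theta lam j) * (q - (w₀ + theta lam j * z))).re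
      ≤ ‖conj (theta lam j) * (q - (w₀ + theta lam j * z))‖ := re_le_norm _
    _ = lam * ‖q - (w₀ + theta lam j * z)‖ := by rw [norm_mul, norm_conj, norm_theta hlam]

theorem re_conj_theta_mul_fmap_sub {lam : ℝ} (hlam : 0 ≤ lam) {j : ℕ} (hj : j = 1 ∨ j = 2)
    (b : ℂ) : (conj (theta lam j) * (fmap lam j b - ((1 + lam / 2 : ℝ) : ℂ))).re
      = lam ^ 2 * (b.re - 1 / 4) := by
  have hexpand : conj (theta lam j) * (fmap lam j b - ((1 + lam / 2 : ℝ) : ℂ))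
      = ((‖theta lam j‖ ^ 2 : ℝ) : ℂ) * b - ((lam / 2 : ℝ) : ℂ) * conj (theta lam j) := by
    push_cast
    rw [← conj_mul', fmap]
    ring
  rw [hexpand, sub_re, re_ofReal_mul, re_ofReal_mul, conj_re, re_theta lam hj, norm_theta hlam]
  ring

section Attractor

variable {lam : ℝ} {A : Set ℂ}

theorem exists_eq_fmap_of_mem (hA : A ⊆ fmap lam 1 '' A ∪ fmap lam 2 '' A) {a : ℂ}
    (ha : a ∈ A) : ∃ j, (j = 1 ∨ j = 2) ∧ ∃ b ∈ A, a = fmap lam j b := by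
  rcases hA ha with ⟨b, hb, rfl⟩ | ⟨b, hb, rfl⟩
  · exact ⟨1, Or.inl rfl, b, hb, rfl⟩
  · exact ⟨2, Or.inr rfl, b, hb, rfl⟩

theorem norm_le_of_mem_attractor (h0 : 0 ≤ lam) (h1 : lam < 1) (hcpt : IsCompact A)
    (hA : A ⊆ fmap lam 1 '' A ∪ fmap lam 2 '' A) : ∀ a ∈ A, ‖a‖ ≤ 1 / (1 - lam) := by
  refine hcpt.norm_le_div_one_sub h0 h1 fun a ha => ?_
  obtain ⟨j, -, b, hb, rfl⟩ := exists_eq_fmap_of_mem hA ha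
  refine ⟨b, hb, ?_⟩
  calc ‖fmap lam j b‖ ≤ ‖(1 : ℂ)‖ + ‖theta lam j * b‖ := norm_add_le _ _
    _ = 1 + lam * ‖b‖ := by rw [norm_one, norm_mul, norm_theta h0]

theorem one_le_re_of_mem_attractor (h0 : 0 ≤ lam) (h1 : lam ≤ 1 / 3) (hcpt : IsCompact A)
    (hA : A ⊆ fmap lam 1 '' A ∪ fmap lam 2 '' A) {a : ℂ} (ha : a ∈ A) : 1 ≤ a.re := by
  obtain ⟨k, hk, b, hb, rfl⟩ := exists_eq_fmap_of_mem hA ha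
  obtain ⟨m, -, d, hd, rfl⟩ := exists_eq_fmap_of_mem hA hb
  have hd_norm : ‖d‖ ≤ 1 / (1 - lam) := norm_le_of_mem_attractor h0 (by linarith) hcpt hA d hd
  have hexpand : (fmap lam k (fmap lam m d)).re
      = 1 + lam / 2 + (theta lam k * theta lam m * d).re := by
    rw [fmap, fmap, mul_add, mul_one, ← mul_assoc, add_re, add_re, one_re, re_theta lam hk]
    ring
  have hcross : -(lam ^ 2 / (1 - lam)) ≤ (theta lam k * theta lam m * d).re := by
    have hnorm : ‖theta lam k * theta lam m * d‖ ≤ lam ^ 2 / (1 - lam) := by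
      rw [norm_mul, norm_mul, norm_theta h0, norm_theta h0, ← sq, div_eq_mul_one_div]
      gcongr
    exact (neg_le_neg hnorm).trans (neg_le_of_abs_le (abs_re_le_norm _))
  have hsmall : lam ^ 2 / (1 - lam) ≤ lam / 2 := by
    rw [div_le_iff₀ (by linarith)]
    nlinarith
  linarith

end Attractor

theorem two_div_sqrt_three_mul_sq_lt {lam : ℝ} (h0 : 0 < lam) (h1 : lam < 1 / 3) :
    2 / Real.sqrt 3 * lam ^ 2 < 3 / 4 * lam := by
  have hsqrt : 1 ≤ Real.sqrt 3 := Real.one_le_sqrt.mpr (by norm_num)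
  have hcoef : 2 / Real.sqrt 3 ≤ 2 := div_le_self (by norm_num) hsqrt
  nlinarith

theorem dist_piece_line_general (lam : ℝ) (h0 : 0 < lam) (h1 : lam < 1 / 3)
    (A : Set ℂ) (hcpt : IsCompact A)
    (hA : A = fmap lam 1 '' A ∪ fmap lam 2 '' A) :
    (∀ j : ℕ, j = 1 ∨ j = 2 →
      ∀ a ∈ fmap lam j '' A, ∀ w ∈ lineThrough lam j (((1 + lam / 2 : ℝ) : ℂ)),
        3 / 4 * lam ≤ dist a w) ∧
    2 / Real.sqrt 3 * lam ^ 2 < 3 / 4 * lam := by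
  refine ⟨?_, two_div_sqrt_three_mul_sq_lt h0 h1⟩
  rintro j hj _ ⟨b, hb, rfl⟩ w hw
  have hre : 1 ≤ b.re := one_le_re_of_mem_attractor h0.le h1.le hcpt hA.subset hb
  have hline := re_conj_theta_mul_sub_le_mul_dist h0.le (fmap lam j b) hw
  rw [re_conj_theta_mul_fmap_sub h0.le hj] at hline
  nlinarith

/-- For 0 < λ < 1/3, with Y''_j the line through P = (1 + λ/2, 0) parallel to
Y_j = f_j({x = 0}): dist(f_j(A), Y''_j) ≥ (3/4)λ > (2/√3)λ². -/
theorem dist_piece_line (lam : ℝ) (h0 : 0 < lam) (h1 : lam < 1 / 3)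
    (A : Set ℂ) (hne : A.Nonempty) (hcpt : IsCompact A)
    (hA : A = fmap lam 1 '' A ∪ fmap lam 2 '' A) :
    (∀ j : ℕ, j = 1 ∨ j = 2 →
      ∀ a ∈ fmap lam j '' A, ∀ w ∈ lineThrough lam j (((1 + lam / 2 : ℝ) : ℂ)),
        3 / 4 * lam ≤ dist a w) ∧
    2 / Real.sqrt 3 * lam ^ 2 < 3 / 4 * lam :=
  dist_piece_line_general lam h0 h1 A hcpt hA
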